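/- arXiv:2409.17631 — 7 statements merged into one kernel-verified Lean document; each statement's English description precedes it below -/
import Mathlib

section
/- Let k ≥ 2 and q = k−1. Let α : Fin k → ℝ with α j > 0 for all j and ∑ j, α j = 1. Let t, t' : Fin k → (Fin q → ℝ) be two families of group centers whose last center is the zero vector (t k₀ = 0 and t' k₀ = 0 for the last index k₀) and such that the q×q matrices whose columns are the first k−1 centers t 0, …, t (k−2) (respectively t' 0, …, t' (k−2)) are invertible. Let μ = ∑ j, α j • δ_{t j} and μ' = ∑ j, α j • δ_{t' j} be the corresponding Dirac-mixture probability measures on Fin q → ℝ. Let V₁, V₂ be maps from measures on Fin q → ℝ to q×q real matrices that are affine equivariant at μ and μ' (i.e., for every invertible q×q matrix A and every b ∈ ℝ^q, Vᵢ of the pushforward of μ (resp. μ') under x ↦ A.mulVec x + b equals A * Vᵢ(μ) * Aᵀ, for i = 1, 2), and assume V₁ μ and V₁ μ' are invertible. Then the matrices (V₁ μ)⁻¹ * (V₂ μ) and (V₁ μ')⁻¹ * (V₂ μ') have the same characteristic polynomial (hence the same eigenvalues). -/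
/-!
The invertible matrix `A = T' T⁻¹` sends every center `t j` to `t' j` (the last centers are both
`0`), so the linear map `x ↦ A x` pushes `μ` forward to `μ'`. Affine equivariance then gives
`Vᵢ μ' = A (Vᵢ μ) Aᵀ`, hence `(V₁ μ')⁻¹ V₂ μ' = A⁻ᵀ ((V₁ μ)⁻¹ V₂ μ) Aᵀ`, a similar matrix.
-/

open MeasureTheory Matrix

theorem Matrix.charpoly_inv_mul_congruence {n R : Type*} [Fintype n] [DecidableEq n] [CommRing R]
    {A : Matrix n n R} (hA : IsUnit A) (B C : Matrix n n R) :
    ((A * B * Aᵀ)⁻¹ * (A * C * Aᵀ)).charpoly = (B⁻¹ * C).charpoly := by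
  have hAt : IsUnit Aᵀ := (isUnit_transpose A).2 hA
  have hconj : (A * B * Aᵀ)⁻¹ * (A * C * Aᵀ) = Aᵀ⁻¹ * (B⁻¹ * C) * Aᵀ := by
    simp only [mul_inv_rev, mul_assoc,
      nonsing_inv_mul_cancel_left _ _ ((isUnit_iff_isUnit_det A).1 hA)]
  rw [hconj, ← hAt.unit_spec, charpoly_units_conj']

theorem MeasureTheory.Measure.map_sum_smul_dirac {α β ι : Type*} [MeasurableSpace α]
    [MeasurableSpace β] [Fintype ι] {f : α → β} (hf : Measurable f) (c : ι → ENNReal)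
    (x : ι → α) :
    (∑ j, c j • Measure.dirac (x j)).map f = ∑ j, c j • Measure.dirac (f (x j)) := by
  rw [← Measure.mapₗ_apply_of_measurable hf, _root_.map_sum]
  simp only [Measure.mapₗ_apply_of_measurable hf, Measure.map_smul, Measure.map_dirac' hf]

theorem Matrix.exists_isUnit_mulVec_col_eq {n ι R : Type*} [Fintype n] [DecidableEq n]
    [CommRing R]
    {e : n → ι} {t t' : ι → n → R} (hT : IsUnit (of fun i j => t (e j) i))
    (hT' : IsUnit (of fun i j => t' (e j) i)) :
    ∃ A : Matrix n n R, IsUnit A ∧ ∀ j, A *ᵥ t (e j) = t' (e j) := by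
  set T : Matrix n n R := of fun i j => t (e j) i
  refine ⟨(of fun i j => t' (e j) i) * T⁻¹, hT'.mul (isUnit_nonsing_inv_iff.2 hT), fun j => ?_⟩
  have hcol : t (e j) = T *ᵥ Pi.single j 1 := by ext i; simp [T]
  rw [hcol, mulVec_mulVec, mul_assoc, nonsing_inv_mul _ ((isUnit_iff_isUnit_det T).1 hT), mul_one]
  ext i; simp

/-- For a Dirac mixture with full-rank group centers matrix (`q = k − 1`), the ICS
eigenvalues for any pair of affine equivariant scatter functionals do not depend on the
group centers, only on the mixture proportions: two such mixtures with the same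
proportions give `V₁⁻¹V₂` matrices with the same characteristic polynomial. -/
theorem ics_eigenvalues_depend_only_on_proportions
    (k : ℕ) (hk : 2 ≤ k) (q : ℕ) (hq : q = k - 1)
    (α : Fin k → ℝ)
    (t t' : Fin k → (Fin q → ℝ))
    (hlast : t ⟨k - 1, by omega⟩ = 0) (hlast' : t' ⟨k - 1, by omega⟩ = 0)
    (hT : IsUnit (Matrix.of fun i j : Fin q => t (Fin.castLE (by omega) j) i))
    (hT' : IsUnit (Matrix.of fun i j : Fin q => t' (Fin.castLE (by omega) j) i))
    (μ μ' : Measure (Fin q → ℝ))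
    (hμ : μ = ∑ j, ENNReal.ofReal (α j) • Measure.dirac (t j))
    (hμ' : μ' = ∑ j, ENNReal.ofReal (α j) • Measure.dirac (t' j))
    (V₁ V₂ : Measure (Fin q → ℝ) → Matrix (Fin q) (Fin q) ℝ)
    (hV₁μ : ∀ A : Matrix (Fin q) (Fin q) ℝ, IsUnit A → ∀ b : Fin q → ℝ,
      V₁ (μ.map (fun x => A.mulVec x + b)) = A * V₁ μ * Aᵀ)
    (hV₂μ : ∀ A : Matrix (Fin q) (Fin q) ℝ, IsUnit A → ∀ b : Fin q → ℝ,
      V₂ (μ.map (fun x => A.mulVec x + b)) = A * V₂ μ * Aᵀ) :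
    ((V₁ μ)⁻¹ * V₂ μ).charpoly = ((V₁ μ')⁻¹ * V₂ μ').charpoly := by
  obtain ⟨A, hA, hA_cols⟩ := exists_isUnit_mulVec_col_eq hT hT'
  have hcenters : ∀ j, A *ᵥ t j + 0 = t' j := by
    intro j
    rw [add_zero]
    rcases lt_or_ge (j : ℕ) q with hj | hj
    · exact hA_cols ⟨j, hj⟩
    · have hj_last : j = ⟨k - 1, by omega⟩ := Fin.ext (by have := j.isLt; simp only; omega)
      rw [hj_last, hlast, hlast', mulVec_zero]
  have hmap : μ.map (fun x => A *ᵥ x + 0) = μ' := by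
    have hf : Measurable fun x => A *ᵥ x + 0 := by fun_prop
    rw [hμ, hμ', Measure.map_sum_smul_dirac hf]
    simp only [hcenters]
  rw [← hmap, hV₁μ A hA 0, hV₂μ A hA 0]
  exact (charpoly_inv_mul_congruence hA _ _).symm
end

section
/- Let μ be a finite measure on Fin q → ℝ, A an invertible q×q real matrix, b ∈ ℝ^q, and let ν be the pushforward of μ under x ↦ A.mulVec x + b. Let V₁, V₂ be maps from measures on Fin q → ℝ to q×q real matrices satisfying V_i(ν) = A * V_i(μ) * Aᵀ for i = 1, 2, and assume V₁ μ is invertible. Then (V₁ ν)⁻¹ * (V₂ ν) = (Aᵀ)⁻¹ * ((V₁ μ)⁻¹ * (V₂ μ)) * Aᵀ; in particular (V₁ ν)⁻¹ * (V₂ ν) and (V₁ μ)⁻¹ * (V₂ μ) have the same characteristic polynomial. -/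
open MeasureTheory Matrix Polynomial

lemma charpoly_conj_aux {n : Type*} [Fintype n] [DecidableEq n] {R : Type*} [CommRing R]
    (P M : Matrix n n R) (hP : IsUnit P) :
    (P⁻¹ * M * P).charpoly = M.charpoly := by
  have hPd : IsUnit P.det := (Matrix.isUnit_iff_isUnit_det P).mp hP
  have hinv : P⁻¹ * P = 1 := Matrix.nonsing_inv_mul P hPd
  have hinv' : P * P⁻¹ = 1 := Matrix.mul_nonsing_inv P hPd
  have hC1 : (C : R →+* R[X]).mapMatrix P⁻¹ * (C : R →+* R[X]).mapMatrix P = 1 := by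
    rw [← RingHom.map_mul, hinv, RingHom.map_one]
  have hC1' : (C : R →+* R[X]).mapMatrix P * (C : R →+* R[X]).mapMatrix P⁻¹ = 1 := by
    rw [← RingHom.map_mul, hinv', RingHom.map_one]
  have key : Matrix.charmatrix (P⁻¹ * M * P) =
      (C : R →+* R[X]).mapMatrix P⁻¹ * Matrix.charmatrix M * (C : R →+* R[X]).mapMatrix P := by
    unfold Matrix.charmatrix
    rw [mul_sub, sub_mul]
    congr 1
    · rw [mul_assoc, (Matrix.scalar_commute (X : R[X]) (Commute.all X) _).eq, ← mul_assoc,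
        hC1, one_mul]
    · rw [RingHom.map_mul, RingHom.map_mul]
  rw [Matrix.charpoly, Matrix.charpoly, key, Matrix.det_mul, Matrix.det_mul, mul_comm,
    ← mul_assoc, ← Matrix.det_mul, hC1', Matrix.det_one, one_mul]

/-- If `ν` is the pushforward of `μ` under the affine map `x ↦ A x + b` with `A` invertible,
and `V₁`, `V₂` are affine equivariant at `μ` for this map, then
`(V₁ ν)⁻¹ (V₂ ν) = (Aᵀ)⁻¹ (V₁ μ)⁻¹ (V₂ μ) Aᵀ`; in particular the two products have the
same characteristic polynomial. -/
theorem ics_matrix_affine_equivariance (q : ℕ) (μ : Measure (Fin q → ℝ))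
    [IsFiniteMeasure μ]
    (A : Matrix (Fin q) (Fin q) ℝ) (hA : IsUnit A) (b : Fin q → ℝ)
    (ν : Measure (Fin q → ℝ)) (hν : ν = μ.map (fun x => A.mulVec x + b))
    (V₁ V₂ : Measure (Fin q → ℝ) → Matrix (Fin q) (Fin q) ℝ)
    (h1 : V₁ ν = A * V₁ μ * Aᵀ) (h2 : V₂ ν = A * V₂ μ * Aᵀ)
    (hinv : IsUnit (V₁ μ)) :
    (V₁ ν)⁻¹ * V₂ ν = Aᵀ⁻¹ * ((V₁ μ)⁻¹ * V₂ μ) * Aᵀ ∧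
      ((V₁ ν)⁻¹ * V₂ ν).charpoly = ((V₁ μ)⁻¹ * V₂ μ).charpoly := by
  have hAd : IsUnit A.det := (Matrix.isUnit_iff_isUnit_det A).mp hA
  have hATd : IsUnit Aᵀ.det := by rwa [Matrix.det_transpose]
  have hAT : IsUnit Aᵀ := (Matrix.isUnit_iff_isUnit_det Aᵀ).mpr hATd
  have hiA : A⁻¹ * A = 1 := Matrix.nonsing_inv_mul A hAd
  have hmain : (V₁ ν)⁻¹ * V₂ ν = Aᵀ⁻¹ * ((V₁ μ)⁻¹ * V₂ μ) * Aᵀ := by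
    rw [h1, h2, Matrix.mul_inv_rev, Matrix.mul_inv_rev]
    simp only [mul_assoc]
    rw [← mul_assoc A⁻¹ A, hiA, one_mul]

  refine ⟨hmain, ?_⟩
  rw [hmain]
  exact charpoly_conj_aux Aᵀ _ hAT
end

section
/- Let α ∈ (0,1) and t₁ ≠ t₂ be real numbers, and let μ = α • δ_{t₁} + (1−α) • δ_{t₂} be the two-point Dirac mixture on ℝ with mean m = α t₁ + (1−α) t₂. Then the ICS ratio cov(μ)⁻¹ · cov₄(μ) equals (α³ + (1−α)³)/(3α(1−α)); in particular it does not depend on the centers t₁ and t₂, but only on the mixture proportion α. -/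
open MeasureTheory

/-- For the two-point Dirac mixture `α • δ_{t₁} + (1−α) • δ_{t₂}`, the ICS ratio
`cov(μ)⁻¹ · cov₄(μ)` equals `(α³ + (1−α)³)/(3α(1−α))`: it only depends on the mixture
proportion `α`, not on the centers `t₁`, `t₂`. -/
theorem ics_ratio_two_point_dirac_mixture (α t₁ t₂ : ℝ) (h0 : 0 < α) (h1 : α < 1)
    (hne : t₁ ≠ t₂)
    (μ : Measure ℝ)
    (hμ : μ = ENNReal.ofReal α • Measure.dirac t₁ +
        ENNReal.ofReal (1 - α) • Measure.dirac t₂)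
    (m : ℝ) (hm : m = α * t₁ + (1 - α) * t₂) :
    (∫ x, (x - m) ^ 2 ∂μ)⁻¹ *
        ((∫ x, (x - m) ^ 4 ∂μ) / (3 * ∫ x, (x - m) ^ 2 ∂μ)) =
      (α ^ 3 + (1 - α) ^ 3) / (3 * α * (1 - α)) := by
  have hint : ∀ n : ℕ, (∫ x, (x - m) ^ n ∂μ)
      = α * (t₁ - m) ^ n + (1 - α) * (t₂ - m) ^ n := by
    intro n
    rw [hμ, integral_add_measure, integral_smul_measure, integral_smul_measure,
      integral_dirac, integral_dirac, smul_eq_mul, smul_eq_mul,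
      ENNReal.toReal_ofReal h0.le, ENNReal.toReal_ofReal (by linarith)]
    · exact ((integrable_const ((t₁ - m) ^ n)).congr
        (ae_eq_dirac (fun x => (x - m) ^ n)).symm).smul_measure (by simp)
    · exact ((integrable_const ((t₂ - m) ^ n)).congr
        (ae_eq_dirac (fun x => (x - m) ^ n)).symm).smul_measure (by simp)
  rw [hint 2, hint 4]
  have ht1 : t₁ - m = (1 - α) * (t₁ - t₂) := by rw [hm]; ring
  have ht2 : t₂ - m = -α * (t₁ - t₂) := by rw [hm]; ring
  rw [ht1, ht2]
  have hs : t₁ - t₂ ≠ 0 := sub_ne_zero.mpr hne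
  have h1' : (1 : ℝ) - α ≠ 0 := by linarith
  have hcov : α * ((1 - α) * (t₁ - t₂)) ^ 2 + (1 - α) * (-α * (t₁ - t₂)) ^ 2
      = α * (1 - α) * (t₁ - t₂) ^ 2 := by ring
  rw [hcov]
  field_simp
  ring
end

section
/- Let α₁, α₂, α₃ > 0 with α₁ + α₂ + α₃ = 1, and let t₁, t₂ be real numbers. Let ν = α₁ • gaussianReal(t₁, 1) + α₂ • gaussianReal(t₂, 1) + α₃ • gaussianReal(0, 1) be a one-dimensional three-component Gaussian mixture, with mean m = ∫ x dν = α₁t₁ + α₂t₂, and set c₁ = t₁ − m, c₂ = t₂ − m, c₃ = −m. Then ∫ (x − m)⁴ dν = 3 (∫ (x − m)² dν)² if and only if α₁(3α₁ − 1)c₁⁴ + α₂(3α₂ − 1)c₂⁴ + α₃(3α₃ − 1)c₃⁴ + 6α₁α₂c₁²c₂² + 6α₁α₃c₁²c₃² + 6α₂α₃c₂²c₃² = 0. -/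
/-!
Integrating by parts against the Gaussian density gives Stein's identity
`∫ (x - μ) f x ∂N(μ, v) = v ∫ f' ∂N(μ, v)`; with `f = x ^ (n + 1)` it becomes the moment recursion
`Mₙ₊₂ = μ Mₙ₊₁ + (n + 1) v Mₙ`, so `N(c, 1)` has second moment `c² + 1` and fourth moment
`c⁴ + 6c² + 3`. Centering at `m` moves the component means to `cᵢ`, and the mixture's moments are
the weighted sums. Since `∑ αᵢ = 1`, the constant and `c²` terms cancel in `M₄ - 3M₂²`, leaving
`∑ αᵢcᵢ⁴ - 3 (∑ αᵢcᵢ²)²`, which is minus the quartic.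
-/

open MeasureTheory ProbabilityTheory

open scoped NNReal

lemma MeasureTheory.integral_ofReal_smul_add_three {α : Type*} [MeasurableSpace α]
    {μ₁ μ₂ μ₃ : Measure α} {a₁ a₂ a₃ : ℝ} (ha₁ : 0 ≤ a₁) (ha₂ : 0 ≤ a₂) (ha₃ : 0 ≤ a₃)
    {f : α → ℝ} (hf₁ : Integrable f μ₁) (hf₂ : Integrable f μ₂) (hf₃ : Integrable f μ₃) :
    ∫ x, f x ∂(ENNReal.ofReal a₁ • μ₁ + ENNReal.ofReal a₂ • μ₂ + ENNReal.ofReal a₃ • μ₃) =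
      a₁ * ∫ x, f x ∂μ₁ + a₂ * ∫ x, f x ∂μ₂ + a₃ * ∫ x, f x ∂μ₃ := by
  have hsmul {a : ℝ} {μ : Measure α} (hf : Integrable f μ) :
      Integrable f (ENNReal.ofReal a • μ) := hf.smul_measure ENNReal.ofReal_ne_top
  rw [integral_add_measure ((hsmul hf₁).add_measure (hsmul hf₂)) (hsmul hf₃),
    integral_add_measure (hsmul hf₁) (hsmul hf₂)]
  simp only [integral_smul_measure, ENNReal.toReal_ofReal, ha₁, ha₂, ha₃, smul_eq_mul]

namespace ProbabilityTheory

lemma hasDerivAt_gaussianPDFReal (μ : ℝ) (v : ℝ≥0) (x : ℝ) :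
    HasDerivAt (gaussianPDFReal μ v) (-((x - μ) / v) * gaussianPDFReal μ v x) x := by
  have hexp : HasDerivAt (fun y => -(y - μ) ^ 2 / (2 * v)) (-((x - μ) / v)) x :=
    (((hasDerivAt_id' x).sub_const μ).fun_pow 2).neg.div_const (2 * (v : ℝ)) |>.congr_deriv
      (by field_simp; ring)
  rw [gaussianPDFReal_def]
  exact (hexp.exp.const_mul _).congr_deriv (by ring)

variable {μ : ℝ} {v : ℝ≥0}

lemma integrable_gaussianReal_iff (hv : v ≠ 0) {f : ℝ → ℝ} :
    Integrable f (gaussianReal μ v) ↔ Integrable fun x => gaussianPDFReal μ v x * f x := by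
  rw [gaussianReal_of_var_ne_zero μ hv, integrable_withDensity_iff_integrable_smul'
    (measurable_gaussianPDF μ v) (ae_of_all _ fun _ => gaussianPDF_lt_top)]
  simp [toReal_gaussianPDF]

lemma integrable_pow_gaussianReal (n : ℕ) : Integrable (fun x => x ^ n) (gaussianReal μ v) :=
  integrable_pow_of_mem_interior_integrableExpSet (X := id) (by simp) n

lemma integral_sub_mul_gaussianReal {f f' : ℝ → ℝ} (hf : ∀ x, HasDerivAt f (f' x) x)
    (hfi : Integrable f (gaussianReal μ v)) (hf'i : Integrable f' (gaussianReal μ v))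
    (hxf : Integrable (fun x => (x - μ) * f x) (gaussianReal μ v)) :
    ∫ x, (x - μ) * f x ∂gaussianReal μ v = v * ∫ x, f' x ∂gaussianReal μ v := by
  rcases eq_or_ne v 0 with rfl | hv
  · simp [gaussianReal_zero_var]
  rw [integrable_gaussianReal_iff hv] at hfi hf'i hxf
  have hrw : ∀ x, f x * (-((x - μ) / v) * gaussianPDFReal μ v x)
      = -(v : ℝ)⁻¹ * (gaussianPDFReal μ v x * ((x - μ) * f x)) := fun x => by ring
  have ibp := integral_mul_deriv_eq_deriv_mul_of_integrable (fun x _ => hf x)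
    (fun x _ => hasDerivAt_gaussianPDFReal μ v x)
    ((hxf.const_mul _).congr (ae_of_all _ fun x => (hrw x).symm))
    (hf'i.congr (ae_of_all _ fun _ => mul_comm _ _))
    (hfi.congr (ae_of_all _ fun _ => mul_comm _ _))
  simp only [hrw, integral_const_mul, mul_comm (f' _)] at ibp
  rw [neg_mul, neg_inj, inv_mul_eq_iff_eq_mul₀ (by exact_mod_cast hv)] at ibp
  simpa only [integral_gaussianReal_eq_integral_smul hv, smul_eq_mul] using ibp

lemma integral_pow_add_two_gaussianReal (n : ℕ) :
    ∫ x, x ^ (n + 2) ∂gaussianReal μ v =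
      μ * ∫ x, x ^ (n + 1) ∂gaussianReal μ v + (n + 1) * v * ∫ x, x ^ n ∂gaussianReal μ v := by
  have hderiv (x : ℝ) : HasDerivAt (fun y => y ^ (n + 1)) ((n + 1 : ℝ) * x ^ n) x := by
    simpa using hasDerivAt_pow (n + 1) x
  have hsplit : (fun x : ℝ => (x - μ) * x ^ (n + 1)) = fun x => x ^ (n + 2) - μ * x ^ (n + 1) := by
    ext x; ring
  have hint : Integrable (fun x : ℝ => μ * x ^ (n + 1)) (gaussianReal μ v) :=
    (integrable_pow_gaussianReal _).const_mul μ
  have stein := integral_sub_mul_gaussianReal hderiv (integrable_pow_gaussianReal _)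
    ((integrable_pow_gaussianReal n).const_mul _)
    (by rw [hsplit]; exact (integrable_pow_gaussianReal (n + 2)).sub hint)
  rw [hsplit, integral_sub (integrable_pow_gaussianReal _) hint, integral_const_mul,
    integral_const_mul] at stein
  linear_combination stein

lemma integral_sq_gaussianReal : ∫ x, x ^ 2 ∂gaussianReal μ v = μ ^ 2 + v := by
  rw [integral_pow_add_two_gaussianReal 0]
  simp only [zero_add, pow_one, pow_zero, integral_id_gaussianReal, integral_const, probReal_univ,
    smul_eq_mul]
  ring

lemma integral_pow_four_gaussianReal :
    ∫ x, x ^ 4 ∂gaussianReal μ v = μ ^ 4 + 6 * μ ^ 2 * v + 3 * v ^ 2 := by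
  rw [integral_pow_add_two_gaussianReal 2, integral_pow_add_two_gaussianReal 1,
    integral_sq_gaussianReal]
  simp only [pow_one, integral_id_gaussianReal]
  push_cast
  ring

lemma integral_sub_pow_gaussianReal (m : ℝ) (k : ℕ) :
    ∫ x, (x - m) ^ k ∂gaussianReal μ v = ∫ x, x ^ k ∂gaussianReal (μ - m) v := by
  rw [← gaussianReal_map_sub_const, integral_map (by fun_prop) (by fun_prop)]

lemma integrable_sub_pow_gaussianReal (m : ℝ) (k : ℕ) :
    Integrable (fun x => (x - m) ^ k) (gaussianReal μ v) := by
  have hk := integrable_pow_gaussianReal (μ := μ - m) (v := v) k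
  rwa [← gaussianReal_map_sub_const, integrable_map_measure (by fun_prop) (by fun_prop)] at hk

end ProbabilityTheory

theorem gaussian_mixture_kurtosis_condition_general (α₁ α₂ α₃ t₁ t₂ : ℝ)
    (h₁ : 0 < α₁) (h₂ : 0 < α₂) (h₃ : 0 < α₃) (hsum : α₁ + α₂ + α₃ = 1)
    (ν : Measure ℝ)
    (hν : ν = ENNReal.ofReal α₁ • gaussianReal t₁ 1 +
        ENNReal.ofReal α₂ • gaussianReal t₂ 1 +
        ENNReal.ofReal α₃ • gaussianReal 0 1)
    (m : ℝ)
    (c₁ c₂ c₃ : ℝ) (hc₁ : c₁ = t₁ - m) (hc₂ : c₂ = t₂ - m) (hc₃ : c₃ = -m) :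
    ∫ x, (x - m) ^ 4 ∂ν = 3 * (∫ x, (x - m) ^ 2 ∂ν) ^ 2 ↔
      α₁ * (3 * α₁ - 1) * c₁ ^ 4 + α₂ * (3 * α₂ - 1) * c₂ ^ 4 +
        α₃ * (3 * α₃ - 1) * c₃ ^ 4 + 6 * α₁ * α₂ * c₁ ^ 2 * c₂ ^ 2 +
        6 * α₁ * α₃ * c₁ ^ 2 * c₃ ^ 2 + 6 * α₂ * α₃ * c₂ ^ 2 * c₃ ^ 2 = 0 := by
  have mixture (k : ℕ) : ∫ x, (x - m) ^ k ∂ν =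
      α₁ * ∫ x, x ^ k ∂gaussianReal c₁ 1 + α₂ * ∫ x, x ^ k ∂gaussianReal c₂ 1 +
        α₃ * ∫ x, x ^ k ∂gaussianReal c₃ 1 := by
    rw [hν, integral_ofReal_smul_add_three h₁.le h₂.le h₃.le (integrable_sub_pow_gaussianReal m k)
      (integrable_sub_pow_gaussianReal m k) (integrable_sub_pow_gaussianReal m k),
      integral_sub_pow_gaussianReal, integral_sub_pow_gaussianReal, integral_sub_pow_gaussianReal,
      hc₁, hc₂, hc₃, zero_sub]
  simp only [mixture, integral_sq_gaussianReal, integral_pow_four_gaussianReal, NNReal.coe_one]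
  obtain rfl : α₃ = 1 - α₁ - α₂ := by linarith
  constructor <;> intro h <;> linear_combination -h

/-- For a three-component one-dimensional Gaussian mixture
`ν = α₁ • N(t₁,1) + α₂ • N(t₂,1) + α₃ • N(0,1)` with mean `m = α₁t₁ + α₂t₂`,
the centered kurtosis condition `∫ (x−m)⁴ dν = 3 (∫ (x−m)² dν)²` holds iff the quartic
expression in the centered centers vanishes. -/
theorem gaussian_mixture_kurtosis_condition (α₁ α₂ α₃ t₁ t₂ : ℝ)
    (h₁ : 0 < α₁) (h₂ : 0 < α₂) (h₃ : 0 < α₃) (hsum : α₁ + α₂ + α₃ = 1)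
    (ν : Measure ℝ)
    (hν : ν = ENNReal.ofReal α₁ • gaussianReal t₁ 1 +
        ENNReal.ofReal α₂ • gaussianReal t₂ 1 +
        ENNReal.ofReal α₃ • gaussianReal 0 1)
    (m : ℝ) (hm : m = α₁ * t₁ + α₂ * t₂)
    (c₁ c₂ c₃ : ℝ) (hc₁ : c₁ = t₁ - m) (hc₂ : c₂ = t₂ - m) (hc₃ : c₃ = -m) :
    ∫ x, (x - m) ^ 4 ∂ν = 3 * (∫ x, (x - m) ^ 2 ∂ν) ^ 2 ↔
      α₁ * (3 * α₁ - 1) * c₁ ^ 4 + α₂ * (3 * α₂ - 1) * c₂ ^ 4 +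
        α₃ * (3 * α₃ - 1) * c₃ ^ 4 + 6 * α₁ * α₂ * c₁ ^ 2 * c₂ ^ 2 +
        6 * α₁ * α₃ * c₁ ^ 2 * c₃ ^ 2 + 6 * α₂ * α₃ * c₂ ^ 2 * c₃ ^ 2 = 0 :=
  gaussian_mixture_kurtosis_condition_general α₁ α₂ α₃ t₁ t₂ h₁ h₂ h₃ hsum ν hν m c₁ c₂ c₃ hc₁ hc₂
    hc₃
end

section
/- Let r_{α₁,α₂}(x) = α₁(−1 + 7α₁ − 12α₁² + 6α₁³)x⁴ + 4α₁α₂(1 − 6α₁ + 6α₁²)x³ + 6α₁α₂(1 − 2α₂ + α₁(−2 + 6α₂))x² + 4α₁α₂(1 − 6α₂ + 6α₂²)x + α₂(−1 + 7α₂ − 12α₂² + 6α₂³). For α₁ = α₂ = 1/6 and x ∈ ℝ, r_{1/6,1/6}(x) = 0 if and only if x = −1, x = (7 + 2√6)/5, or x = (7 − 2√6)/5. -/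
/-- The degree-4 polynomial `r_{α₁,α₂}` from Proposition 2. -/
noncomputable def rPoly (α₁ α₂ x : ℝ) : ℝ :=
  α₁ * (-1 + 7 * α₁ - 12 * α₁ ^ 2 + 6 * α₁ ^ 3) * x ^ 4 +
    4 * α₁ * α₂ * (1 - 6 * α₁ + 6 * α₁ ^ 2) * x ^ 3 +
    6 * α₁ * α₂ * (1 - 2 * α₂ + α₁ * (-2 + 6 * α₂)) * x ^ 2 +
    4 * α₁ * α₂ * (1 - 6 * α₂ + 6 * α₂ ^ 2) * x +
    α₂ * (-1 + 7 * α₂ - 12 * α₂ ^ 2 + 6 * α₂ ^ 3)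

/-- For `α₁ = α₂ = 1/6`, the real roots of `r_{1/6,1/6}` are exactly `-1`,
`(7 + 2√6)/5` and `(7 − 2√6)/5`. -/
theorem rPoly_sixth_roots (x : ℝ) :
    rPoly (1 / 6) (1 / 6) x = 0 ↔
      x = -1 ∨ x = (7 + 2 * Real.sqrt 6) / 5 ∨ x = (7 - 2 * Real.sqrt 6) / 5 := by
  have hs : Real.sqrt 6 ^ 2 = 6 := Real.sq_sqrt (by norm_num)
  set s := Real.sqrt 6 with hsdef
  have hfac : rPoly (1 / 6) (1 / 6) x =
      -(1 / 1080) * ((x + 1) ^ 2 * ((5 * x - 7 - 2 * s) * (5 * x - 7 + 2 * s))) := by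
    unfold rPoly
    nlinarith [hs, sq_nonneg x]
  rw [hfac]
  constructor
  · intro h
    have h2 : (x + 1) ^ 2 * ((5 * x - 7 - 2 * s) * (5 * x - 7 + 2 * s)) = 0 := by
      nlinarith [h]
    rcases mul_eq_zero.mp h2 with h3 | h3
    · left
      have := pow_eq_zero_iff (n := 2) (by norm_num) |>.mp h3
      linarith
    · rcases mul_eq_zero.mp h3 with h4 | h4
      · right; left; linarith
      · right; right; linarith
  · rintro (rfl | rfl | rfl) <;> ring
end

section
/- Let r_{α₁,α₂}(x) = α₁(−1 + 7α₁ − 12α₁² + 6α₁³)x⁴ + 4α₁α₂(1 − 6α₁ + 6α₁²)x³ + 6α₁α₂(1 − 2α₂ + α₁(−2 + 6α₂))x² + 4α₁α₂(1 − 6α₂ + 6α₂²)x + α₂(−1 + 7α₂ − 12α₂² + 6α₂³). For α₁ = α₂ = 1/3, the polynomial r_{1/3,1/3} has no real root: r_{1/3,1/3}(x) ≠ 0 for every x ∈ ℝ. -/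
/-- For `α₁ = α₂ = 1/3`, the polynomial `r_{1/3,1/3}` has no real root. -/
theorem rPoly_third_no_real_root (x : ℝ) : rPoly (1 / 3) (1 / 3) x ≠ 0 := by
  have h : rPoly (1 / 3) (1 / 3) x = 2 / 27 * ((x - 1 / 2) ^ 2 + 3 / 4) ^ 2 := by
    unfold rPoly; ring
  rw [h]
  positivity
end

section
/- Let r_{α₁,α₂}(x) = α₁(−1 + 7α₁ − 12α₁² + 6α₁³)x⁴ + 4α₁α₂(1 − 6α₁ + 6α₁²)x³ + 6α₁α₂(1 − 2α₂ + α₁(−2 + 6α₂))x² + 4α₁α₂(1 − 6α₂ + 6α₂²)x + α₂(−1 + 7α₂ − 12α₂² + 6α₂³). For α₁ = α₂ = 1/4, the polynomial r_{1/4,1/4} has no real root: r_{1/4,1/4}(x) ≠ 0 for every x ∈ ℝ. -/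
/-- For `α₁ = α₂ = 1/4`, the polynomial `r_{1/4,1/4}` has no real root. -/
theorem rPoly_quarter_no_real_root (x : ℝ) : rPoly (1 / 4) (1 / 4) x ≠ 0 := by
  have h : rPoly (1 / 4) (1 / 4) x > 0 := by
    unfold rPoly
    nlinarith [sq_nonneg (x^2 - x + 1), sq_nonneg (x^2 + 1), sq_nonneg x, sq_nonneg (x - 1), sq_nonneg (x^2 - 1)]
  linarith
end
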